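/- arXiv:2605.27260 — 4 statements merged into one kernel-verified Lean document; each statement's English description precedes it below -/
import Mathlib

section
/- In the level-set setting: (i) for every vector field u : U → ℝⁿ differentiable at x, div_M(y ↦ N(y) u(y))(x) = ⟨u(x), κ(x)⟩; (ii) the mean curvature vector is normal at x, i.e. P(x) κ(x) = 0. -/
/-! Write `M = DN(x)` and `P = I - N(x)`. Differentiating `Nᵀ = N` and `N² = N` at `x` shows that
every `M w` is symmetric and that `P (M w) = (M w) N`. The one linear-algebra fact needed is that
`Σ_k G(P e_k, N e_k) = 0` for every bilinear `G`, since `Σ_k P e_k ⊗ N e_k` is the matrix `P N = 0`.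
By the product rule `D(N u) = N Du + M(·) u`, this fact kills the tangential term `tr(N Du P)`,
leaving `div_M(N u) = ⟨u, Σ_k M(P e_k) e_k⟩`; constant fields `u = e_j` identify this vector with
`κ`, and then `P κ = Σ_k M(P e_k) N e_k = 0` by the same fact. -/

noncomputable section

open scoped RealInnerProductSpace

/-- Euclidean space `ℝⁿ`. -/
abbrev E (n : ℕ) := EuclideanSpace ℝ (Fin n)

/-- The standard orthonormal basis vector `e_k` of `ℝⁿ`. -/
def stdb (n : ℕ) (k : Fin n) : E n := EuclideanSpace.single k 1

/-- The submanifold divergence of a vector field `v` at `y`, with respect to the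
projection field `P(y) = I − N(y)`:
`div_M v(y) := Σ_k ⟨Dv(y)[P(y) e_k], e_k⟩`. -/
def divM (n : ℕ) (Nf : E n → (E n →L[ℝ] E n)) (v : E n → E n) (y : E n) : ℝ :=
  ∑ k, ⟪fderiv ℝ v y (stdb n k - Nf y (stdb n k)), stdb n k⟫

/-- The mean curvature vector, defined componentwise by
`κ_j(y) := div_M(z ↦ N(z) e_j)(y)`. -/
def kappa (n : ℕ) (Nf : E n → (E n →L[ℝ] E n)) (y : E n) : E n :=
  ∑ j, (divM n Nf (fun z => Nf z (stdb n j)) y) • stdb n j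

open Filter Topology

section Projection

variable {ι V W : Type*} [Fintype ι] [NormedAddCommGroup V] [InnerProductSpace ℝ V]
  [AddCommGroup W] [Module ℝ W]

theorem OrthonormalBasis.sum_apply_map_map_eq (b : OrthonormalBasis ι ℝ V)
    (G : V →ₗ[ℝ] V →ₗ[ℝ] W) {A A' : V →ₗ[ℝ] V} (hA : ∀ a c, ⟪A a, c⟫ = ⟪a, A' c⟫)
    (B : V →ₗ[ℝ] V) :
    ∑ k, G (A (b k)) (B (b k)) = ∑ k, G (b k) (B (A' (b k))) := by
  calc ∑ k, G (A (b k)) (B (b k))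
      = ∑ k, ∑ j, ⟪b j, A (b k)⟫ • G (b j) (B (b k)) := by
        refine Finset.sum_congr rfl fun k _ => ?_
        conv_lhs => rw [← b.sum_repr' (A (b k))]
        simp only [map_sum, map_smul, LinearMap.sum_apply, LinearMap.smul_apply]
    _ = ∑ j, ∑ k, ⟪b k, A' (b j)⟫ • G (b j) (B (b k)) := by
        rw [Finset.sum_comm]
        refine Finset.sum_congr rfl fun j _ => Finset.sum_congr rfl fun k _ => ?_
        rw [real_inner_comm, hA]
    _ = ∑ j, G (b j) (B (A' (b j))) := by
        refine Finset.sum_congr rfl fun j _ => ?_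
        conv_rhs => rw [← b.sum_repr' (A' (b j))]
        simp only [map_sum, map_smul]

theorem OrthonormalBasis.sum_apply_sub_map_map_eq_zero (b : OrthonormalBasis ι ℝ V)
    (G : V →ₗ[ℝ] V →ₗ[ℝ] W) {N : V →ₗ[ℝ] V} (hsym : N.IsSymmetric)
    (hidem : ∀ a, N (N a) = N a) :
    ∑ k, G (b k - N (b k)) (N (b k)) = 0 := by
  have hP : ∀ a c, ⟪((1 : V →ₗ[ℝ] V) - N) a, c⟫ = ⟪a, ((1 : V →ₗ[ℝ] V) - N) c⟫ := by
    intro a c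
    simp only [LinearMap.sub_apply, Module.End.one_apply, inner_sub_left, inner_sub_right, hsym a c]
  have htransfer := b.sum_apply_map_map_eq G hP N
  simpa only [map_sub, LinearMap.sub_apply, Finset.sum_sub_distrib, Module.End.one_apply, hidem,
    sub_self, map_zero, Finset.sum_const_zero] using htransfer

end Projection

section FamilyDerivative

variable {𝕜 G F : Type*} [NontriviallyNormedField 𝕜] [NormedAddCommGroup G] [NormedSpace 𝕜 G]
  [NormedAddCommGroup F] [NormedSpace 𝕜 F] {N : G → F →L[𝕜] F} {x : G}

theorem DifferentiableAt.hasFDerivAt_clm_apply_const (hN : DifferentiableAt 𝕜 N x) (c : F) :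
    HasFDerivAt (fun y => N y c) ((fderiv 𝕜 N x).flip c) x := by
  simpa using hN.hasFDerivAt.clm_apply (hasFDerivAt_const c x)

theorem fderiv_apply_sub_eq_of_eventually_idempotent (hN : DifferentiableAt 𝕜 N x)
    (hidem : ∀ᶠ y in 𝓝 x, ∀ a, N y (N y a) = N y a) (w : G) (a : F) :
    fderiv 𝕜 N x w a - N x (fderiv 𝕜 N x w a) = fderiv 𝕜 N x w (N x a) := by
  have hcomp := hN.hasFDerivAt.clm_apply (hN.hasFDerivAt_clm_apply_const a)
  have heq : (fun y => N y (N y a)) =ᶠ[𝓝 x] fun y => N y a := hidem.mono fun y hy => hy a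
  have hderiv := heq.fderiv_eq (𝕜 := 𝕜)
  rw [hcomp.fderiv, (hN.hasFDerivAt_clm_apply_const a).fderiv] at hderiv
  have hw := congr($hderiv w)
  simp only [add_apply, ContinuousLinearMap.comp_apply, ContinuousLinearMap.flip_apply] at hw
  exact (eq_sub_of_add_eq' hw).symm

end FamilyDerivative

section SymmetricFamily

variable {G V : Type*} [NormedAddCommGroup G] [NormedSpace ℝ G]
  [NormedAddCommGroup V] [InnerProductSpace ℝ V] {N : G → V →L[ℝ] V} {x : G}

theorem isSymmetric_fderiv_apply_of_eventually (hN : DifferentiableAt ℝ N x)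
    (hsym : ∀ᶠ y in 𝓝 x, (N y : V →ₗ[ℝ] V).IsSymmetric) (w : G) :
    (fderiv ℝ N x w : V →ₗ[ℝ] V).IsSymmetric := by
  intro a b
  have hleft := (hN.hasFDerivAt_clm_apply_const a).inner ℝ (hasFDerivAt_const b x)
  have hright := (hasFDerivAt_const a x).inner ℝ (hN.hasFDerivAt_clm_apply_const b)
  have heq : (fun y => ⟪N y a, b⟫) =ᶠ[𝓝 x] fun y => ⟪a, N y b⟫ := hsym.mono fun y hy => hy a b
  have hderiv := heq.fderiv_eq (𝕜 := ℝ)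
  rw [hleft.fderiv, hright.fderiv] at hderiv
  have hw := congr($hderiv w)
  simpa only [ContinuousLinearMap.coe_coe, ContinuousLinearMap.comp_apply,
    ContinuousLinearMap.prod_apply, ContinuousLinearMap.flip_apply, zero_apply,
    fderivInnerCLM_apply, inner_zero_right, zero_add, inner_zero_left, add_zero] using hw

end SymmetricFamily

theorem stdb_eq_basisFun (n : ℕ) : stdb n = EuclideanSpace.basisFun (Fin n) ℝ := by
  funext k
  simp [stdb]

section LevelSet

variable {n : ℕ} {Nf : E n → E n →L[ℝ] E n} {x : E n} (hN : DifferentiableAt ℝ Nf x)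
  (hsym : ∀ᶠ y in 𝓝 x, (Nf y : E n →ₗ[ℝ] E n).IsSymmetric)
  (hidem : ∀ᶠ y in 𝓝 x, ∀ a, Nf y (Nf y a) = Nf y a)
include hN hsym hidem

theorem divM_apply_eq_inner {u : E n → E n} (hu : DifferentiableAt ℝ u x) :
    divM n Nf (fun y => Nf y (u y)) x
      = ⟪u x, ∑ k, fderiv ℝ Nf x (stdb n k - Nf x (stdb n k)) (stdb n k)⟫ := by
  have htangential :
      ∑ k, ⟪Nf x (fderiv ℝ u x (stdb n k - Nf x (stdb n k))), stdb n k⟫ = 0 := by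
    rw [stdb_eq_basisFun, ← (EuclideanSpace.basisFun (Fin n) ℝ).sum_apply_sub_map_map_eq_zero
      ((innerₗ (E n)).comp (fderiv ℝ u x : E n →ₗ[ℝ] E n)) hsym.self_of_nhds hidem.self_of_nhds]
    exact Finset.sum_congr rfl fun k _ => hsym.self_of_nhds _ _
  unfold divM
  rw [(hN.hasFDerivAt.clm_apply hu.hasFDerivAt).fderiv]
  simp only [add_apply, ContinuousLinearMap.comp_apply,
    ContinuousLinearMap.flip_apply, inner_add_left, Finset.sum_add_distrib, htangential, zero_add,
    inner_sum]
  exact Finset.sum_congr rfl fun k _ => isSymmetric_fderiv_apply_of_eventually hN hsym _ _ _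

theorem kappa_eq_sum_fderiv :
    kappa n Nf x = ∑ k, fderiv ℝ Nf x (stdb n k - Nf x (stdb n k)) (stdb n k) := by
  unfold kappa
  simp only [divM_apply_eq_inner hN hsym hidem (u := fun _ => stdb n _) (differentiableAt_const _)]
  rw [stdb_eq_basisFun]
  exact (EuclideanSpace.basisFun (Fin n) ℝ).sum_repr' _

theorem kappa_sub_apply_kappa_eq_zero : kappa n Nf x - Nf x (kappa n Nf x) = 0 := by
  rw [kappa_eq_sum_fderiv hN hsym hidem, map_sum, ← Finset.sum_sub_distrib]
  simp only [fderiv_apply_sub_eq_of_eventually_idempotent hN hidem, stdb_eq_basisFun]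
  exact (EuclideanSpace.basisFun (Fin n) ℝ).sum_apply_sub_map_map_eq_zero
    (fderiv ℝ Nf x).toLinearMap₁₂ hsym.self_of_nhds hidem.self_of_nhds

end LevelSet

/-- In the level-set setting (a C² field `N` of symmetric idempotent matrices on an
open neighborhood `U` of `x`):
(i) for every vector field `u` differentiable at `x`,
`div_M(y ↦ N(y) u(y))(x) = ⟨u(x), κ(x)⟩`;
(ii) the mean curvature vector is normal at `x`: `P(x) κ(x) = 0`. -/
theorem divM_normal_part_and_kappa_normal (n : ℕ)
    (U : Set (E n)) (hU : IsOpen U) (x : E n) (hx : x ∈ U)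
    (Nf : E n → (E n →L[ℝ] E n))
    (hC2 : ContDiffOn ℝ 2 Nf U)
    (hsym : ∀ y ∈ U, ∀ a b : E n, ⟪Nf y a, b⟫ = ⟪a, Nf y b⟫)
    (hidem : ∀ y ∈ U, ∀ a : E n, Nf y (Nf y a) = Nf y a) :
    (∀ u : E n → E n, DifferentiableAt ℝ u x →
        divM n Nf (fun y => Nf y (u y)) x = ⟪u x, kappa n Nf x⟫) ∧
    kappa n Nf x - Nf x (kappa n Nf x) = 0 := by
  have hU_nhds : U ∈ 𝓝 x := hU.mem_nhds hx
  have hN : DifferentiableAt ℝ Nf x := (hC2.contDiffAt hU_nhds).differentiableAt (by norm_num)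
  have hsym_nhds : ∀ᶠ y in 𝓝 x, (Nf y : E n →ₗ[ℝ] E n).IsSymmetric :=
    eventually_of_mem hU_nhds hsym
  have hidem_nhds : ∀ᶠ y in 𝓝 x, ∀ a, Nf y (Nf y a) = Nf y a := eventually_of_mem hU_nhds hidem
  refine ⟨fun u hu => ?_, kappa_sub_apply_kappa_eq_zero hN hsym_nhds hidem_nhds⟩
  rw [divM_apply_eq_inner hN hsym_nhds hidem_nhds hu, kappa_eq_sum_fderiv hN hsym_nhds hidem_nhds]
end
end

section
/- Let 0 ≤ s < q, let S be a map from ℝⁿ to rank-s tensors and T a map from ℝⁿ to rank-q tensors, both Fréchet differentiable at x ∈ ℝⁿ, and let P : ℝⁿ → ℝⁿ be a linear map. Then for all v_1,…,v_{q−s−1} ∈ ℝⁿ: Div_M(y ↦ S(y):T(y))(x)(v_1,…,v_{q−s−1}) = (S(x) : Div_M T(x))(v_1,…,v_{q−s−1}) + Σ_{ι:{1,…,s}→{1,…,n}} Σ_{k=1}^n T(x)(e_{ι(1)},…,e_{ι(s)}, v_1,…,v_{q−s−1}, e_k)·(DS(x)[P e_k])(e_{ι(1)},…,e_{ι(s)}).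 (In the paper's notation, Div_M(S:T) = S:Div_M T + T:∇_M S.) -/
noncomputable section

/-- The (finite-dimensional, hence normed) space of rank-`q` tensors on `ℝⁿ`. -/
abbrev CMM (n q : ℕ) := ContinuousMultilinearMap ℝ (fun _ : Fin q => E n) ℝ

/-- Left-contraction `S : T` of a rank-`s` tensor with a rank-`(s+r)` tensor:
`(S:T)(v) := Σ_ι S(e_{ι(1)},…,e_{ι(s)}) · T(e_{ι(1)},…,e_{ι(s)}, v)`
(for `s = 0` this is the scalar multiple `S·T`). -/
def contrL (n s r : ℕ) (S : (Fin s → E n) → ℝ) (T : (Fin (s + r) → E n) → ℝ) :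
    (Fin r → E n) → ℝ :=
  fun vs => ∑ ι : Fin s → Fin n,
    S (fun k => stdb n (ι k)) * T (Fin.append (fun k => stdb n (ι k)) vs)

/-!
The contraction `S : T` is a finite sum of products of components of `S` and `T`, so the
ordinary Leibniz rule gives `D(S:T)[u] = S : DT[u] + DS[u] : T`. Taking `u = P e_k` and
summing over `k`, the first term is `S : Div_M T` because the slot being traced is not
one of the contracted ones, and the second is `T : ∇_M S`.
-/

theorem contrL_sum_snoc {n s r : ℕ} {κ : Type*} [Fintype κ] (S : (Fin s → E n) → ℝ)
    (T : κ → (Fin (s + (r + 1)) → E n) → ℝ) (w : κ → E n) (vs : Fin r → E n) :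
    contrL n s r S (fun ws => ∑ k, T k (Fin.snoc ws (w k))) vs
      = ∑ k, contrL n s (r + 1) S (T k) (Fin.snoc vs (w k)) := by
  simp only [contrL, Finset.mul_sum, Fin.append_snoc]
  exact Finset.sum_comm

theorem fderiv_contrL_apply {n s r : ℕ} {S : E n → CMM n s} {T : E n → CMM n (s + r)} {x : E n}
    (hS : DifferentiableAt ℝ S x) (hT : DifferentiableAt ℝ T x) (vs : Fin r → E n) (u : E n) :
    fderiv ℝ (fun y => contrL n s r (S y) (T y) vs) x u
      = contrL n s r (S x) (fderiv ℝ T x u) vs + contrL n s r (fderiv ℝ S x u) (T x) vs := by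
  have hST : HasFDerivAt (fun y => contrL n s r (S y) (T y) vs)
      (∑ ι : Fin s → Fin n,
        (S x (fun i => stdb n (ι i)) •
            (fderiv ℝ T x).flipMultilinear (Fin.append (fun i => stdb n (ι i)) vs)
          + T x (Fin.append (fun i => stdb n (ι i)) vs) •
            (fderiv ℝ S x).flipMultilinear (fun i => stdb n (ι i)))) x :=
    HasFDerivAt.fun_sum fun ι _ =>
      (hS.hasFDerivAt.continuousMultilinear_apply_const _).mul
        (hT.hasFDerivAt.continuousMultilinear_apply_const _)
  rw [hST.fderiv]
  simp [contrL, Finset.sum_add_distrib, mul_comm]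

/-- Product rule for the submanifold divergence of a left-contraction
(`0 ≤ s < q` with `q := s + (r+1)`):
`Div_M(S:T) = S : Div_M T + T : ∇_M S`, written out slotwise. -/
theorem divM_contraction_product_rule (n s r : ℕ)
    (S : E n → CMM n s) (T : E n → CMM n (s + (r + 1))) (x : E n)
    (hS : DifferentiableAt ℝ S x) (hT : DifferentiableAt ℝ T x)
    (P : E n →ₗ[ℝ] E n) :
    ∀ vs : Fin r → E n,
      (∑ k, fderiv ℝ
          (fun y => contrL n s (r + 1) (fun z => S y z) (fun z => T y z)
            (Fin.snoc vs (stdb n k))) x (P (stdb n k)))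
        = contrL n s r (fun z => S x z)
            (fun ws => ∑ k, fderiv ℝ T x (P (stdb n k)) (Fin.snoc ws (stdb n k))) vs
          + ∑ ι : Fin s → Fin n, ∑ k,
              T x (Fin.append (fun i => stdb n (ι i)) (Fin.snoc vs (stdb n k)))
                * fderiv ℝ S x (P (stdb n k)) (fun i => stdb n (ι i)) := by
  intro vs
  simp only [fderiv_contrL_apply hS hT, Finset.sum_add_distrib, contrL_sum_snoc]
  congr 1
  rw [Finset.sum_comm]
  simp only [contrL, mul_comm]
end
end

section
/- Let q ≥ 0, let T : ℝ × ℝⁿ → (rank-q tensors) be C² on a neighborhood of (t,x), let w : ℝⁿ → ℝⁿ be Fréchet differentiable at x, and let P : ℝ × ℝⁿ → L(ℝⁿ,ℝⁿ) be C¹ near (t,x). Then for every b ∈ ℝⁿ: D_y(y ↦ 𝒟_w T(t,y))(x)[P(t,x) b] − 𝒟_w((s,y) ↦ D_y T(s,y)[P(s,y) b])(t,x) = D_y T(t,x)[ Dw(x)[P(t,x) b] − (𝒟_w P)(t,x)[b] ]. (This is the commutator identity ∇_M(𝒟_w T) − 𝒟_w(∇_M T) = ∇T ○ (2C[w] + ∇_M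 wᵀ), where 2C[w] := −𝒟_w P and ∇_M wᵀ is the rank-2 tensor (a,b) ↦ ⟨a, Dw(x)[P(t,x) b]⟩.) -/
/-!
Write `W = (1, w)` and `V = (0, P b)` as vector fields on space-time `ℝ × ℝⁿ`. The material
derivative is differentiation along `W`, and the first term of the commutator is the derivative
along `V` of `DT[W]`, restricted to the time slice `t`. Since `T` is `C²`, its second derivative
is symmetric, so the commutator of differentiation along `V` and along `W` is differentiation
along their Lie bracket `DW[V] - DV[W] = (0, Dw[P b] - (𝒟_w P)[b])`.
-/

noncomputable section

open VectorField

section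

variable {𝕜 : Type*} [NontriviallyNormedField 𝕜]
  {F G H : Type*} [NormedAddCommGroup F] [NormedSpace 𝕜 F] [NormedAddCommGroup G]
  [NormedSpace 𝕜 G] [NormedAddCommGroup H] [NormedSpace 𝕜 H]

theorem fderiv_comp_prodMk_right_apply {f : F × G → H} {a : F} {y : G}
    (hf : DifferentiableAt 𝕜 f (a, y)) (v : G) :
    fderiv 𝕜 (fun z => f (a, z)) y v = fderiv 𝕜 f (a, y) (0, v) := by
  rw [← Function.comp_def, (hf.hasFDerivAt.comp y (hasFDerivAt_prodMk_right a y)).fderiv]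
  rfl

theorem fderiv_const_prodMk_apply (c : G) {g : F → H} {x : F}
    (hg : DifferentiableAt 𝕜 g x) (v : F) :
    fderiv 𝕜 (fun z => (c, g z)) x v = (0, fderiv 𝕜 g x v) := by
  rw [((hasFDerivAt_const c x).prodMk hg.hasFDerivAt).fderiv]
  rfl

theorem lieBracket_const_prodMk {a c : F} {f g : F × G → G} {p : F × G}
    (hf : DifferentiableAt 𝕜 f p) (hg : DifferentiableAt 𝕜 g p) :
    lieBracket 𝕜 (fun z => (a, f z)) (fun z => (c, g z)) p
      = (0, fderiv 𝕜 g p (a, f p) - fderiv 𝕜 f p (c, g p)) := by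
  rw [lieBracket, fderiv_const_prodMk_apply _ hf, fderiv_const_prodMk_apply _ hg, Prod.mk_sub_mk,
    sub_self]

end

/-- Commutator of the material derivative `𝒟_w F(t,x) = ∂_t F + D_y F[w(x)]`
(encoded as the full Fréchet derivative of a field on `ℝ × ℝⁿ` in the direction
`(1, w)`) with the submanifold gradient built from a time-dependent projection
field `P`: for a C² rank-`q` tensor field `T`, a C¹ field `P` and every `b ∈ ℝⁿ`,
`D_y(𝒟_w T)(x)[P(t,x) b] − 𝒟_w(D_y T[P b])(t,x)
  = D_y T(t,x)[Dw(x)[P(t,x) b] − (𝒟_w P)(t,x)[b]]`,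
i.e. `∇_M(𝒟_w T) − 𝒟_w(∇_M T) = ∇T ○ (2C[w] + ∇_M wᵀ)` with `2C[w] := −𝒟_w P`. -/
theorem material_derivative_submanifold_gradient_commutator (n q : ℕ)
    (T : ℝ × E n → CMM n q) (t : ℝ) (x : E n)
    (hT : ContDiffAt ℝ 2 T (t, x))
    (w : E n → E n) (hw : DifferentiableAt ℝ w x)
    (Pf : ℝ × E n → (E n →L[ℝ] E n)) (hP : ContDiffAt ℝ 1 Pf (t, x)) :
    ∀ b : E n,
      fderiv ℝ (fun y => fderiv ℝ T (t, y) (1, w y)) x (Pf (t, x) b)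
        - fderiv ℝ (fun p : ℝ × E n => fderiv ℝ T p (0, Pf p b)) (t, x) (1, w x)
        = fderiv ℝ T (t, x)
            (0, fderiv ℝ w x (Pf (t, x) b) - fderiv ℝ Pf (t, x) (1, w x) b) := by
  intro b
  set W : ℝ × E n → ℝ × E n := fun p => (1, w p.2)
  set V : ℝ × E n → ℝ × E n := fun p => (0, Pf p b)
  have hw' : HasFDerivAt (fun p : ℝ × E n => w p.2)
      ((fderiv ℝ w x).comp (ContinuousLinearMap.snd ℝ ℝ (E n))) (t, x) :=
    hw.hasFDerivAt.comp (t, x) hasFDerivAt_snd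
  have hPd : DifferentiableAt ℝ Pf (t, x) := hP.differentiableAt one_ne_zero
  have hPb : DifferentiableAt ℝ (fun p => Pf p b) (t, x) :=
    hPd.clm_apply (differentiableAt_const b)
  have hW : DifferentiableAt ℝ W (t, x) := (differentiableAt_const 1).prodMk hw'.differentiableAt
  have hV : DifferentiableAt ℝ V (t, x) := (differentiableAt_const 0).prodMk hPb
  have hTW : DifferentiableAt ℝ (fun p => fderiv ℝ T p (W p)) (t, x) :=
    ((hT.fderiv_right le_rfl).differentiableAt one_ne_zero).clm_apply hW
  have hslice : fderiv ℝ (fun y => fderiv ℝ T (t, y) (1, w y)) x (Pf (t, x) b)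
      = fderiv ℝ (fun p => fderiv ℝ T p (W p)) (t, x) (V (t, x)) :=
    (fderiv_comp_prodMk_right_apply hTW _).trans rfl
  have hbracket : lieBracket ℝ V W (t, x)
      = (0, fderiv ℝ w x (Pf (t, x) b) - fderiv ℝ Pf (t, x) (1, w x) b) := by
    rw [lieBracket_const_prodMk hPb hw'.differentiableAt, hw'.fderiv,
      fderiv_clm_apply hPd (differentiableAt_const b)]
    simp
  rw [hslice, ← hbracket, fderiv_apply_lieBracket hT (by simp) hW hV]
end
end

section
/- Fix 1 ≤ i, j ≤ n, a point x ∈ ℝⁿ and a linear map P : ℝⁿ → ℝⁿ. Let A be a map from ℝⁿ to rank-2 tensors, Fréchet differentiable at x. Define the rank-1 tensor field F by F(y)(v) := y_i·A(y)(e_j, v) − y_j·A(y)(e_i, v), where y_i, y_j are the i-th and j-th Cartesian coordinates of y. Then Div_M F(x) = x_i·(Div_M A(x))(e_j) − x_j·(Div_M A(x))(e_i) + Σ_{k=1}^n [⟨P e_k, e_i⟩·A(x)(e_j, e_k) − ⟨P e_k, e_j⟩·A(x)(e_i, e_k)]. (In the paper's notation, Div_M(l_{ij} : A) = l_{ij}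 : Div_M A − A ⊙ ω_{ij} when P is self-adjoint, where l_{ij}(y) := y_i e_jᵀ − y_j e_iᵀ and ω_{ij} := eⁱ ⊗ Pʲ − eʲ ⊗ Pⁱ.) -/
/-! By the product rule, differentiating the coordinate factor `y_i` in the direction `P e_k`
gives `(P e_k)_i = ⟪P e_k, e_i⟫`, while differentiating the tensor factor and summing over `k`
gives the contraction of `Div_M A`. -/

noncomputable section

open scoped RealInnerProductSpace

section ScalarTimesTensor

variable {𝕜 F G ι : Type*} [NontriviallyNormedField 𝕜] [NormedAddCommGroup F] [NormedSpace 𝕜 F]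
  [NormedAddCommGroup G] [NormedSpace 𝕜 G] [Fintype ι]
  {c : F → 𝕜} {A : F → ContinuousMultilinearMap 𝕜 (fun _ : ι => G) 𝕜} {x : F}

theorem DifferentiableAt.mul_continuousMultilinear_apply_const (hc : DifferentiableAt 𝕜 c x)
    (hA : DifferentiableAt 𝕜 A x) (u : ι → G) :
    DifferentiableAt 𝕜 (fun y => c y * A y u) x :=
  hc.mul (hA.continuousMultilinear_apply_const u)

theorem fderiv_mul_continuousMultilinear_apply_const_apply (hc : DifferentiableAt 𝕜 c x)
    (hA : DifferentiableAt 𝕜 A x) (u : ι → G) (v : F) :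
    fderiv 𝕜 (fun y => c y * A y u) x v = fderiv 𝕜 c x v * A x u + c x * fderiv 𝕜 A x v u := by
  rw [fderiv_fun_mul hc (hA.continuousMultilinear_apply_const u)]
  simp only [add_apply, smul_apply, smul_eq_mul,
    fderiv_continuousMultilinear_apply_const_apply hA]
  ring

end ScalarTimesTensor

theorem inner_stdb_right {n : ℕ} (v : E n) (i : Fin n) : ⟪v, stdb n i⟫ = v i := by
  simp [stdb, EuclideanSpace.inner_single_right]

theorem fderiv_angularMomentum_apply {𝕜 ι κ G : Type*} [RCLike 𝕜] [Fintype ι] [Fintype κ]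
    [NormedAddCommGroup G] [NormedSpace 𝕜 G] (i j : ι)
    {A : EuclideanSpace 𝕜 ι → ContinuousMultilinearMap 𝕜 (fun _ : κ => G) 𝕜}
    {x : EuclideanSpace 𝕜 ι} (hA : DifferentiableAt 𝕜 A x) (u w : κ → G)
    (v : EuclideanSpace 𝕜 ι) :
    fderiv 𝕜 (fun y => y i * A y u - y j * A y w) x v
      = x i * fderiv 𝕜 A x v u - x j * fderiv 𝕜 A x v w + (v i * A x u - v j * A x w) := by
  have hcoord (l : ι) := PiLp.hasFDerivAt_apply (𝕜 := 𝕜) 2 x l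
  rw [fderiv_fun_sub ((hcoord i).differentiableAt.mul_continuousMultilinear_apply_const hA u)
      ((hcoord j).differentiableAt.mul_continuousMultilinear_apply_const hA w),
    sub_apply,
    fderiv_mul_continuousMultilinear_apply_const_apply (hcoord i).differentiableAt hA,
    fderiv_mul_continuousMultilinear_apply_const_apply (hcoord j).differentiableAt hA,
    (hcoord i).fderiv, (hcoord j).fderiv, PiLp.proj_apply, PiLp.proj_apply]
  ring

/-- Submanifold divergence of the angular-momentum contraction
`F(y)(v) := y_i·A(y)(e_j, v) − y_j·A(y)(e_i, v)` of a rank-2 tensor field `A`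
(with `Div_M` taken w.r.t. the linear map `P`):
`Div_M(l_{ij} : A) = l_{ij} : Div_M A − A ⊙ ω_{ij}`, written out explicitly. -/
theorem divM_angular_momentum_contraction (n : ℕ) (i j : Fin n) (x : E n)
    (P : E n →ₗ[ℝ] E n)
    (A : E n → CMM n 2) (hA : DifferentiableAt ℝ A x) :
    ∑ k, fderiv ℝ
        (fun y => y i * A y ![stdb n j, stdb n k] - y j * A y ![stdb n i, stdb n k])
        x (P (stdb n k))
      = x i * (∑ k, fderiv ℝ A x (P (stdb n k)) ![stdb n j, stdb n k])
        - x j * (∑ k, fderiv ℝ A x (P (stdb n k)) ![stdb n i, stdb n k])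
        + ∑ k, (⟪P (stdb n k), stdb n i⟫ * A x ![stdb n j, stdb n k]
            - ⟪P (stdb n k), stdb n j⟫ * A x ![stdb n i, stdb n k]) := by
  simp only [fderiv_angularMomentum_apply i j hA, inner_stdb_right, Finset.mul_sum,
    ← Finset.sum_sub_distrib, ← Finset.sum_add_distrib]
end
end
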